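/- For every A ∈ M_n(ℂ) there exists a polynomial τ_A (the conjugating polynomial) such that A^c = τ_A(A); consequently, if B commutes with A then B commutes with A^c. -/

import Mathlib

open Matrix Polynomial
open scoped ComplexConjugate

noncomputable section

lemma commute_aeval' {R A : Type*} [CommSemiring R] [Semiring A] [Algebra R A] {a b : A}
    (h : Commute a b) (p : R[X]) : Commute (aeval a p) b := by
  induction p using Polynomial.induction_on' with
  | add p q hp hq => simpa [map_add] using hp.add_left hq
  | monomial k c =>
      rw [aeval_monomial]
      exact (Algebra.commute_algebraMap_left c b).mul_left (h.pow_left k)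

lemma commute_aeval_aeval {R A : Type*} [CommSemiring R] [Semiring A] [Algebra R A] {a b : A}
    (h : Commute a b) (p q : R[X]) : Commute (aeval a p) (aeval b q) :=
  commute_aeval' ((commute_aeval' h.symm q).symm) p

lemma aeval_unit_conj {n : ℕ} (T M : Matrix (Fin n) (Fin n) ℂ) (hT : IsUnit T) (p : ℂ[X]) :
    aeval (T * M * T⁻¹) p = T * aeval M p * T⁻¹ := by
  have hd : IsUnit T.det := (Matrix.isUnit_iff_isUnit_det T).mp hT
  have h1 : T⁻¹ * T = 1 := Matrix.nonsing_inv_mul T hd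
  have h2 : T * T⁻¹ = 1 := Matrix.mul_nonsing_inv T hd
  have hp : ∀ k : ℕ, (T * M * T⁻¹) ^ k = T * M ^ k * T⁻¹ := by
    intro k
    induction k with
    | zero => simp [h2]
    | succ k ih =>
        rw [pow_succ, pow_succ, ih]
        calc T * M ^ k * T⁻¹ * (T * M * T⁻¹) = T * M ^ k * (T⁻¹ * T) * M * T⁻¹ := by
              noncomm_ring
          _ = T * (M ^ k * M) * T⁻¹ := by rw [h1]; noncomm_ring
  induction p using Polynomial.induction_on' with
  | add p q hp hq =>
      rw [map_add, map_add, hp, hq]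
      noncomm_ring
  | monomial k c =>
      rw [aeval_monomial, aeval_monomial, hp k, Algebra.algebraMap_eq_smul_one]
      simp only [smul_mul_assoc, one_mul]
      rw [Matrix.mul_smul, Matrix.smul_mul]

lemma aeval_diagonal' {n : ℕ} (d : Fin n → ℂ) (q : ℂ[X]) :
    aeval (Matrix.diagonal d) q = Matrix.diagonal (fun i => q.eval (d i)) := by
  have h0 : Matrix.diagonal d = Matrix.diagonalAlgHom ℂ d := rfl
  rw [h0, aeval_algHom_apply]
  show Matrix.diagonal (aeval d q) = _
  have h2 : (aeval d q : Fin n → ℂ) = fun i => q.eval (d i) := by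
    funext i
    rw [show (aeval d q) i = Pi.evalAlgHom ℂ _ i (aeval d q) from rfl, ← aeval_algHom_apply]
    simp [aeval_def]
  rw [h2]

lemma exists_e (S : Finset ℂ) (m : ℕ) (l : ℂ) :
    ∃ e : ℂ[X], ((X - C l) ^ m ∣ (e - 1)) ∧ ∀ μ ∈ S, μ ≠ l → (X - C μ) ^ m ∣ e := by
  set g : ℂ[X] := ∏ μ ∈ S.erase l, (X - C μ) with hg
  have hcop : IsCoprime ((X - C l) ^ m) (g ^ m) := by
    apply IsCoprime.pow
    apply IsCoprime.prod_right
    intro μ hμ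
    have hne : l ≠ μ := fun h => (Finset.ne_of_mem_erase hμ) h.symm
    exact Polynomial.isCoprime_X_sub_C_of_isUnit_sub (sub_ne_zero_of_ne hne).isUnit
  obtain ⟨u, v, huv⟩ := hcop
  refine ⟨v * g ^ m, ⟨-u, by linear_combination huv⟩, ?_⟩
  intro μ hμ hne
  have h1 : (X - C μ) ∣ g := Finset.dvd_prod_of_mem _ (Finset.mem_erase.mpr ⟨hne, hμ⟩)
  exact dvd_mul_of_dvd_right (pow_dvd_pow_of_dvd h1 m) v

lemma diagonal_finset_sum {n : ℕ} {ι : Type*} (s : Finset ι) (f : ι → Fin n → ℂ) :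
    ∑ l ∈ s, Matrix.diagonal (f l) = Matrix.diagonal (fun i => ∑ l ∈ s, f l i) := by
  rw [show (fun i => ∑ l ∈ s, f l i) = ∑ l ∈ s, f l by funext i; simp]
  exact (map_sum (Matrix.diagonalAlgHom ℂ) f s).symm

/-- `B` is the conjugate `A^c` of `A`, defined via a Jordan-type decomposition
`A = T (D + N) T⁻¹` with `D` diagonal, `N` nilpotent commuting with `D`,
by `A^c = T ⬝ \overline{D} ⬝ T⁻¹`. -/
def Matrix.IsJordanConj {n : Type*} [Fintype n] [DecidableEq n]
    (A B : Matrix n n ℂ) : Prop :=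
  ∃ T D N : Matrix n n ℂ, IsUnit T ∧ D.IsDiag ∧ IsNilpotent N ∧ D * N = N * D ∧
    A = T * (D + N) * T⁻¹ ∧ B = T * D.map (starRingEnd ℂ) * T⁻¹

/-- `A^c` is a polynomial in `A`; consequently every matrix commuting with `A`
commutes with `A^c`. -/
theorem conj_is_polynomial {n : ℕ} (A Ac : Matrix (Fin n) (Fin n) ℂ)
    (h : Matrix.IsJordanConj A Ac) :
    (∃ p : Polynomial ℂ, Ac = Polynomial.aeval A p) ∧
    ∀ B : Matrix (Fin n) (Fin n) ℂ, A * B = B * A → Ac * B = B * Ac := by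
  obtain ⟨T, D, N, hT, hD, hN, hDN, hA, hAc⟩ := h
  obtain ⟨k, hk⟩ := hN
  set m := k + 1 with hm
  have hNm : N ^ m = 0 := by rw [hm, pow_succ, hk, zero_mul]
  set d : Fin n → ℂ := fun i => D i i with hd
  have hDd : D = Matrix.diagonal d := (hD.diagonal_diag).symm
  set S : Finset ℂ := Finset.univ.image d with hS
  choose e he1 he2 using exists_e S m
  -- evaluation of the idempotent polynomials at the eigenvalues
  have heval : ∀ l, ∀ i, (e l).eval (d i) = if d i = l then 1 else 0 := by
    intro l i
    by_cases hi : d i = l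
    · rw [if_pos hi, hi]
      obtain ⟨c, hc⟩ := dvd_trans (dvd_pow_self _ (Nat.succ_ne_zero k)) (he1 l)
      have := congrArg (Polynomial.eval l) hc
      simpa [sub_eq_zero] using this
    · rw [if_neg hi]
      have hdi : d i ∈ S := Finset.mem_image_of_mem d (Finset.mem_univ i)
      obtain ⟨c, hc⟩ := dvd_trans (dvd_pow_self _ (Nat.succ_ne_zero k))
        (he2 l (d i) hdi hi)
      have := congrArg (Polynomial.eval (d i)) hc
      simpa using this
  set M : Matrix (Fin n) (Fin n) ℂ := D + N with hM
  have hcDN : Commute D N := hDN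
  have hcDM : Commute D M := (Commute.refl D).add_right hcDN
  set P : ℂ → Matrix (Fin n) (Fin n) ℂ := fun l => aeval D (e l) with hP
  have hPdiag : ∀ l, P l = Matrix.diagonal (fun i => if d i = l then 1 else 0) := by
    intro l
    show aeval D (e l) = _
    rw [hDd, aeval_diagonal']
    exact congrArg Matrix.diagonal (funext fun i => heval l i)
  set p : ℂ[X] := ∑ l ∈ S, C (conj l) * e l with hp
  have hsum1 : ∑ l ∈ S, P l = 1 := by
    rw [Finset.sum_congr rfl (fun l _ => hPdiag l), diagonal_finset_sum, ← Matrix.diagonal_one]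
    refine congrArg Matrix.diagonal (funext fun i => ?_)
    have hdi : d i ∈ S := Finset.mem_image_of_mem d (Finset.mem_univ i)
    rw [Finset.sum_ite_eq S (d i) (fun _ => (1:ℂ)), if_pos hdi]
  have hsumD : ∑ l ∈ S, conj l • P l = D.map (starRingEnd ℂ) := by
    have : ∀ l ∈ S, conj l • P l
        = Matrix.diagonal (fun i => if d i = l then conj l else 0) := by
      intro l _
      rw [hPdiag l, ← Matrix.diagonal_smul]
      exact congrArg Matrix.diagonal (funext fun i => by by_cases hi : d i = l <;> simp [hi])
    rw [Finset.sum_congr rfl this, diagonal_finset_sum, hDd,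
      Matrix.diagonal_map (map_zero (starRingEnd ℂ))]
    refine congrArg Matrix.diagonal (funext fun i => ?_)
    have hdi : d i ∈ S := Finset.mem_image_of_mem d (Finset.mem_univ i)
    rw [Finset.sum_ite_eq S (d i) (fun l => conj l), if_pos hdi]
  have hdvd_p : ∀ l ∈ S, (X - C l) ^ m ∣ (p - C (conj l)) := by
    intro l hl
    have hsplit : p - C (conj l)
        = C (conj l) * (e l - 1) + ∑ μ ∈ S.erase l, C (conj μ) * e μ := by
      rw [hp, ← Finset.add_sum_erase S _ hl]
      ring
    rw [hsplit]
    apply dvd_add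
    · exact (he1 l).mul_left _
    · apply Finset.dvd_sum
      intro μ hμ
      obtain ⟨hne, hmem⟩ := Finset.mem_erase.mp hμ
      exact (he2 μ l hl (Ne.symm hne)).mul_left _
  have hkey : ∀ l ∈ S, aeval M p * P l = conj l • P l := by
    intro l hl
    obtain ⟨q, hq⟩ := hdvd_p l hl
    have h1 : aeval M p - conj l • 1 = (M - l • 1) ^ m * aeval M q := by
      have := congrArg (aeval M) hq
      simpa [_root_.map_sub, _root_.map_mul, _root_.map_pow, aeval_X, aeval_C,
        Algebra.algebraMap_eq_smul_one] using this
    have hQdiag := hPdiag l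
    have hQidem : P l * P l = P l := by
      rw [hQdiag, Matrix.diagonal_mul_diagonal]
      exact congrArg Matrix.diagonal (funext fun i => by by_cases hi : d i = l <;> simp [hi])
    have hcNQ : Commute N (P l) := (commute_aeval' hcDN (e l)).symm
    have hcDQ : Commute D (P l) := (commute_aeval' (Commute.refl D) (e l)).symm
    have hcMQ : Commute (M - l • 1) (P l) :=
      (hcDQ.add_left hcNQ).sub_left ((Commute.one_left (P l)).smul_left l)
    have hMQ : (M - l • 1) * P l = N * P l := by
      have hexp : (M - l • 1) * P l = (D - l • 1) * P l + N * P l := by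
        rw [hM]; noncomm_ring
      have hz : (D - l • 1) * P l = 0 := by
        rw [hDd, hQdiag, ← Matrix.diagonal_one, ← Matrix.diagonal_smul,
          Matrix.diagonal_sub, Matrix.diagonal_mul_diagonal, ← Matrix.diagonal_zero]
        refine congrArg Matrix.diagonal (funext fun i => ?_)
        by_cases hi : d i = l <;> simp [hi]
      rw [hexp, hz, zero_add]
    have hpow0 : (M - l • 1) ^ m * P l = 0 := by
      calc (M - l • 1) ^ m * P l = (M - l • 1) ^ m * (P l) ^ m := by
            rw [IsIdempotentElem.pow_succ_eq k hQidem]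
        _ = ((M - l • 1) * P l) ^ m := (hcMQ.mul_pow m).symm
        _ = (N * P l) ^ m := by rw [hMQ]
        _ = N ^ m * (P l) ^ m := hcNQ.mul_pow m
        _ = 0 := by rw [hNm, zero_mul]
    have hcqQ : Commute (aeval M q) (P l) := commute_aeval_aeval hcDM.symm q (e l)
    have hz : aeval M p * P l - conj l • P l = 0 := by
      have h2 : (aeval M p - conj l • 1) * P l = aeval M p * P l - conj l • P l := by
        rw [sub_mul, smul_mul_assoc, one_mul]
      rw [← h2, h1, mul_assoc, hcqQ.eq, ← mul_assoc, hpow0, zero_mul]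
    rw [← sub_eq_zero]
    exact hz
  have hfinal : aeval M p = D.map (starRingEnd ℂ) := by
    calc aeval M p = aeval M p * ∑ l ∈ S, P l := by rw [hsum1, mul_one]
      _ = ∑ l ∈ S, aeval M p * P l := by rw [Finset.mul_sum]
      _ = ∑ l ∈ S, conj l • P l := Finset.sum_congr rfl hkey
      _ = D.map (starRingEnd ℂ) := hsumD
  have hAcp : Ac = aeval A p := by
    rw [hAc, hA, aeval_unit_conj T M hT p, hfinal]
  refine ⟨⟨p, hAcp⟩, ?_⟩
  intro B hB
  rw [hAcp]
  exact (commute_aeval' (show Commute A B from hB) p).eq
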